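/- arXiv:1509.02576 — 5 statements merged into one kernel-verified Lean document; each statement's English description precedes it below -/
import Mathlib

section
/- Let U = (u_1,…,u_n) be points in ℝ^d and W = (w_1,…,w_m) closed balls in ℝ^d. Define the greedy indices: j*(1) is the smallest k with w_k contained in the closed δ-ball around u_1, and inductively j*(i+1) is the smallest k ≥ j*(i) with w_k ⊆ D(u_{i+1},δ). If for some i no such index exists (i.e., no k in [j*(i-1), m] has w_k ⊆ D(u_i,δ)), then there exists a realization B of W with F_c(U,B) > δ; consequently the supremum over realizations B of F_c(U,B) exceeds δ. -/
open Metric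

noncomputable section

/-- Points in `ℝ^k`. -/
abbrev Pt (k : ℕ) := EuclideanSpace ℝ (Fin k)

/-- One step in the discrete Fréchet coupling: advance in `A`, in `B`, or both. -/
def dfStep {n m : ℕ} (p q : Fin (n+1) × Fin (m+1)) : Prop :=
  ((q.1 : ℕ) = (p.1 : ℕ) + 1 ∧ q.2 = p.2) ∨
  (q.1 = p.1 ∧ (q.2 : ℕ) = (p.2 : ℕ) + 1) ∨
  ((q.1 : ℕ) = (p.1 : ℕ) + 1 ∧ (q.2 : ℕ) = (p.2 : ℕ) + 1)

/-- `(a_n, b_m)` is reachable from `(a_1, b_1)` in the graph `G_δ`. -/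
def dfReach {k n m : ℕ} (a : Fin (n+1) → Pt k) (b : Fin (m+1) → Pt k) (δ : ℝ) : Prop :=
  dist (a 0) (b 0) ≤ δ ∧ dist (a (Fin.last n)) (b (Fin.last m)) ≤ δ ∧
  Relation.ReflTransGen
    (fun p q => dfStep p q ∧ dist (a p.1) (b p.2) ≤ δ ∧ dist (a q.1) (b q.2) ≤ δ)
    (0, 0) (Fin.last n, Fin.last m)

/-- The discrete Fréchet distance. -/
def dF {k n m : ℕ} (a : Fin (n+1) → Pt k) (b : Fin (m+1) → Pt k) : ℝ :=
  sInf {δ : ℝ | 0 < δ ∧ dfReach a b δ}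

/-- One-sided discrete Fréchet distance with shortcuts on side `B`:
the minimum of `dF A B'` over nonempty subsequences `B'` of `B`. -/
def Fc {k n m : ℕ} (a : Fin (n+1) → Pt k) (b : Fin (m+1) → Pt k) : ℝ :=
  sInf {v : ℝ | ∃ (l : ℕ) (f : Fin (l+1) → Fin (m+1)), StrictMono f ∧ v = dF a (b ∘ f)}

namespace GreedyAux

/-- The least index `k ≥ p`, `k ≤ m` with property `G i k`; sentinel `m+1` on failure. -/
noncomputable def gnxt (m : ℕ) (G : ℕ → ℕ → Prop) (i p : ℕ) : ℕ :=
  sInf ({k | p ≤ k ∧ k ≤ m ∧ G i k} ∪ {m+1})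

/-- The greedy sequence of indices. -/
noncomputable def gJ (m : ℕ) (G : ℕ → ℕ → Prop) : ℕ → ℕ
  | 0 => gnxt m G 0 0
  | (i+1) => gnxt m G (i+1) (gJ m G i)

lemma gnxt_le (m : ℕ) (G : ℕ → ℕ → Prop) (i p : ℕ) : gnxt m G i p ≤ m + 1 :=
  Nat.sInf_le (Or.inr rfl)

lemma le_gnxt (m : ℕ) (G : ℕ → ℕ → Prop) (i p : ℕ) (hp : p ≤ m + 1) : p ≤ gnxt m G i p := by
  refine le_csInf ⟨m+1, Or.inr rfl⟩ ?_
  rintro x (⟨h, -, -⟩ | h)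
  · exact h
  · simp only [Set.mem_singleton_iff] at h; omega

lemma gnxt_not (m : ℕ) (G : ℕ → ℕ → Prop) (i p k : ℕ) (h1 : p ≤ k) (h2 : k ≤ m)
    (h3 : k < gnxt m G i p) : ¬ G i k := by
  intro hg
  have hmem : k ∈ ({k | p ≤ k ∧ k ≤ m ∧ G i k} ∪ {m+1} : Set ℕ) := Or.inl ⟨h1, h2, hg⟩
  have h4 : gnxt m G i p ≤ k := Nat.sInf_le hmem
  omega

lemma gnxt_mem (m : ℕ) (G : ℕ → ℕ → Prop) (i p : ℕ) (h : gnxt m G i p ≤ m) :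
    p ≤ gnxt m G i p ∧ gnxt m G i p ≤ m ∧ G i (gnxt m G i p) := by
  have hne : ({k | p ≤ k ∧ k ≤ m ∧ G i k} ∪ {m+1} : Set ℕ).Nonempty := ⟨m+1, Or.inr rfl⟩
  have hmem : gnxt m G i p ∈ ({k | p ≤ k ∧ k ≤ m ∧ G i k} ∪ {m+1} : Set ℕ) := Nat.sInf_mem hne
  rcases hmem with h' | h'
  · exact h'
  · simp only [Set.mem_singleton_iff] at h'
    omega

lemma gJ_le (m : ℕ) (G : ℕ → ℕ → Prop) (i : ℕ) : gJ m G i ≤ m + 1 := by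
  cases i with
  | zero => exact gnxt_le m G 0 0
  | succ i => exact gnxt_le m G (i+1) (gJ m G i)

lemma gJ_mono (m : ℕ) (G : ℕ → ℕ → Prop) : Monotone (gJ m G) := by
  refine monotone_nat_of_le_succ ?_
  intro i
  exact le_gnxt m G (i+1) (gJ m G i) (gJ_le m G i)

lemma gJ_G (m : ℕ) (G : ℕ → ℕ → Prop) (t : ℕ) (h : gJ m G t ≤ m) : G t (gJ m G t) := by
  cases t with
  | zero => exact (gnxt_mem m G 0 0 h).2.2
  | succ t => exact (gnxt_mem m G (t+1) (gJ m G t) h).2.2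

/-- The greedy combinatorial core. -/
lemma greedy_core {n m : ℕ} (G : ℕ → ℕ → Prop)
    (hfail : ¬ ∃ j : Fin (n+1) → Fin (m+1), Monotone j ∧ ∀ i : Fin (n+1), G (i : ℕ) ((j i : ℕ))) :
    ∃ a : Fin (m+1) → Fin (n+1), (∀ k : Fin (m+1), ¬ G ((a k : ℕ)) ((k : ℕ))) ∧
      ∀ j : Fin (n+1) → Fin (m+1), Monotone j → ∃ i : Fin (n+1), a (j i) = i := by
  classical
  -- greedy fails somewhere in range
  have hex : ∃ i, i ≤ n ∧ gJ m G i = m + 1 := by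
    by_contra hc
    push_neg at hc
    have hle : ∀ i, i ≤ n → gJ m G i ≤ m := by
      intro i hi
      have h1 : gJ m G i ≤ m + 1 := gJ_le m G i
      have h2 : gJ m G i ≠ m + 1 := hc i hi
      omega
    refine hfail ⟨fun i => ⟨gJ m G (i : ℕ),
        by have := hle (i : ℕ) (Nat.lt_succ_iff.mp i.isLt); omega⟩, ?_, ?_⟩
    · intro x y hxy
      exact Fin.mk_le_mk.mpr (gJ_mono m G hxy)
    · intro i
      exact gJ_G m G (i : ℕ) (hle _ (Nat.lt_succ_iff.mp i.isLt))
  obtain ⟨iw, hiwn, hiw⟩ := hex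
  have hi0ne : {i | gJ m G i = m + 1}.Nonempty := ⟨iw, hiw⟩
  set i0 : ℕ := sInf {i | gJ m G i = m + 1} with hi0def
  have hJi0 : gJ m G i0 = m + 1 := Nat.sInf_mem hi0ne
  have hi0n : i0 ≤ n := le_trans (Nat.sInf_le hiw) hiwn
  -- responsibility assignment
  have hsetne : ∀ k : ℕ, k ≤ m → {i | k < gJ m G i}.Nonempty := fun k hk => ⟨i0, by
    show k < gJ m G i0; omega⟩
  set a' : ℕ → ℕ := fun k => sInf {i | k < gJ m G i} with ha'def
  have ha_mem : ∀ k : ℕ, k ≤ m → k < gJ m G (a' k) := by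
    intro k hk
    exact Nat.sInf_mem (hsetne k hk)
  have ha_le : ∀ k : ℕ, k ≤ m → a' k ≤ i0 := by
    intro k hk
    exact Nat.sInf_le (by show k < gJ m G i0; omega)
  have ha_min : ∀ k i : ℕ, i < a' k → gJ m G i ≤ k := by
    intro k i hi
    by_contra hcc
    push_neg at hcc
    have h2 : a' k ≤ i := Nat.sInf_le hcc
    omega
  -- claim 1: G fails at the responsible row
  have claim1 : ∀ k : ℕ, k ≤ m → ¬ G (a' k) k := by
    intro k hk
    rcases h : a' k with _ | t
    · have hkJ : k < gJ m G 0 := by have := ha_mem k hk; rwa [h] at this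
      exact gnxt_not m G 0 0 k (Nat.zero_le k) hk hkJ
    · have h1 : gJ m G t ≤ k := ha_min k t (by omega)
      have h2 : k < gJ m G (t+1) := by have := ha_mem k hk; rwa [h] at this
      exact gnxt_not m G (t+1) (gJ m G t) k h1 hk h2
  -- claim 2: every monotone matching hits a responsible row
  have claim2 : ∀ j : Fin (n+1) → Fin (m+1), Monotone j →
      ∃ i : Fin (n+1), a' ((j i : ℕ)) = (i : ℕ) := by
    intro j hmono
    by_contra hc
    push_neg at hc
    have aux : ∀ t : ℕ, ∀ ht : t ≤ n,
        t < a' ((j ⟨t, Nat.lt_succ_of_le ht⟩ : Fin (m+1)) : ℕ) := by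
      intro t
      induction t with
      | zero =>
        intro ht
        have h0 := hc ⟨0, Nat.lt_succ_of_le ht⟩
        rw [show ((⟨0, Nat.lt_succ_of_le ht⟩ : Fin (n+1)) : ℕ) = 0 from rfl] at h0
        omega
      | succ t ih =>
        intro ht
        have ht' : t ≤ n := by omega
        have iht := ih ht'
        have hJt : gJ m G t ≤ ((j ⟨t, Nat.lt_succ_of_le ht'⟩ : Fin (m+1)) : ℕ) := by
          by_contra hcc
          push_neg at hcc
          have h2 : a' ((j ⟨t, Nat.lt_succ_of_le ht'⟩ : Fin (m+1)) : ℕ) ≤ t := Nat.sInf_le hcc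
          omega
        have hjmono : ((j ⟨t, Nat.lt_succ_of_le ht'⟩ : Fin (m+1)) : ℕ) ≤
            ((j ⟨t+1, Nat.lt_succ_of_le ht⟩ : Fin (m+1)) : ℕ) :=
          hmono (Fin.mk_le_mk.mpr (by omega))
        have hbig : t + 1 ≤ a' ((j ⟨t+1, Nat.lt_succ_of_le ht⟩ : Fin (m+1)) : ℕ) := by
          by_contra hcc
          push_neg at hcc
          have hmem := ha_mem ((j ⟨t+1, Nat.lt_succ_of_le ht⟩ : Fin (m+1)) : ℕ)
            (Nat.lt_succ_iff.mp (j _).isLt)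
          have hJs : gJ m G (a' ((j ⟨t+1, Nat.lt_succ_of_le ht⟩ : Fin (m+1)) : ℕ)) ≤ gJ m G t :=
            gJ_mono m G (by omega)
          omega
        have hne := hc ⟨t+1, Nat.lt_succ_of_le ht⟩
        rw [show ((⟨t+1, Nat.lt_succ_of_le ht⟩ : Fin (n+1)) : ℕ) = t+1 from rfl] at hne
        omega
    have h1 := aux i0 hi0n
    have h2 := ha_le ((j ⟨i0, Nat.lt_succ_of_le hi0n⟩ : Fin (m+1)) : ℕ)
      (Nat.lt_succ_iff.mp (j _).isLt)
    omega
  refine ⟨fun k => ⟨a' (k : ℕ), ?_⟩, ?_, ?_⟩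
  · have := ha_le (k : ℕ) (Nat.lt_succ_iff.mp k.isLt)
    omega
  · intro k
    exact claim1 (k : ℕ) (Nat.lt_succ_iff.mp k.isLt)
  · intro j hj
    obtain ⟨i, hi⟩ := claim2 j hj
    exact ⟨i, Fin.ext hi⟩

end GreedyAux

-- L1: extraction of a monotone matching from a reachability path
lemma extract_mono {d n l : ℕ} (u : Fin (n+1) → Pt d) (v : Fin (l+1) → Pt d) (δ : ℝ)
    (h00 : dist (u 0) (v 0) ≤ δ) {q : Fin (n+1) × Fin (l+1)}
    (h : Relation.ReflTransGen
      (fun p q => dfStep p q ∧ dist (u p.1) (v p.2) ≤ δ ∧ dist (u q.1) (v q.2) ≤ δ) (0,0) q) :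
    ∃ j : Fin (n+1) → Fin (l+1), Monotone j ∧ j q.1 = q.2 ∧
      ∀ i, i ≤ q.1 → dist (u i) (v (j i)) ≤ δ := by
  induction h with
  | refl =>
    refine ⟨fun _ => 0, monotone_const, rfl, ?_⟩
    intro i hi
    have : i = 0 := le_antisymm hi (Fin.zero_le i)
    subst this
    simpa using h00
  | @tail p q hpath hstep ih =>
    obtain ⟨j, hmono, hjp, hall⟩ := ih
    obtain ⟨hst, hdp, hdq⟩ := hstep
    have hA : (q.1 : ℕ) = (p.1 : ℕ) + 1 ∨ (q.1 : ℕ) = (p.1 : ℕ) := by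
      rcases hst with ⟨h1, _⟩ | ⟨h1, _⟩ | ⟨h1, _⟩
      · exact Or.inl h1
      · exact Or.inr (congrArg Fin.val h1)
      · exact Or.inl h1
    have hB : (p.2 : ℕ) ≤ (q.2 : ℕ) := by
      rcases hst with ⟨_, h2⟩ | ⟨_, h2⟩ | ⟨_, h2⟩
      · exact le_of_eq (congrArg Fin.val h2).symm
      · omega
      · omega
    refine ⟨fun i => if (i : ℕ) < (q.1 : ℕ) then j i else q.2, ?_, ?_, ?_⟩
    · intro x y hxy
      have hxy' : (x : ℕ) ≤ (y : ℕ) := hxy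
      dsimp only
      split_ifs with h1 h2 h2
      · exact hmono hxy
      · have hxb : (x : ℕ) ≤ (p.1 : ℕ) := by omega
        have : j x ≤ j p.1 := hmono hxb
        have h2 : j p.1 = p.2 := hjp
        calc j x ≤ j p.1 := this
          _ = p.2 := hjp
          _ ≤ q.2 := hB
      · omega
      · exact le_refl _
    · simp
    · intro i hi
      have hi' : (i : ℕ) ≤ (q.1 : ℕ) := hi
      dsimp only
      split_ifs with h1
      · have hib : (i : ℕ) ≤ (p.1 : ℕ) := by omega
        exact hall i hib
      · have : i = q.1 := Fin.ext (by omega)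
        rw [this]
        exact hdq

-- L2: reachability at a level dominating all distances
lemma reach_full {d n l : ℕ} (u : Fin (n+1) → Pt d) (v : Fin (l+1) → Pt d) (δ : ℝ)
    (h : ∀ i k, dist (u i) (v k) ≤ δ) :
    Relation.ReflTransGen
      (fun p q => dfStep p q ∧ dist (u p.1) (v p.2) ≤ δ ∧ dist (u q.1) (v q.2) ≤ δ)
      (0,0) (Fin.last n, Fin.last l) := by
  set R : Fin (n+1) × Fin (l+1) → Fin (n+1) × Fin (l+1) → Prop :=
    fun p q => dfStep p q ∧ dist (u p.1) (v p.2) ≤ δ ∧ dist (u q.1) (v q.2) ≤ δ with hR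
  have A : ∀ i : ℕ, ∀ hi : i < n+1, Relation.ReflTransGen R (0,0) (⟨i, hi⟩, 0) := by
    intro i
    induction i with
    | zero =>
      intro hi
      have : ((⟨0, hi⟩ : Fin (n+1)), (0 : Fin (l+1))) = ((0 : Fin (n+1)), (0 : Fin (l+1))) := by
        simp
      rw [this]
    | succ i ih =>
      intro hi
      refine (ih (by omega)).tail ?_
      refine ⟨Or.inl ⟨rfl, rfl⟩, h _ _, h _ _⟩
  have B : ∀ k : ℕ, ∀ hk : k < l+1, Relation.ReflTransGen R (Fin.last n, 0) (Fin.last n, ⟨k, hk⟩) := by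
    intro k
    induction k with
    | zero =>
      intro hk
      have : ((⟨0, hk⟩ : Fin (l+1))) = (0 : Fin (l+1)) := by simp
      rw [this]
    | succ k ih =>
      intro hk
      refine (ih (by omega)).tail ?_
      exact ⟨Or.inr (Or.inl ⟨rfl, rfl⟩), h _ _, h _ _⟩
  have hlast : (Fin.last n) = (⟨n, Nat.lt_succ_self n⟩ : Fin (n+1)) := rfl
  have h1 := A n (Nat.lt_succ_self n)
  rw [← hlast] at h1
  have h2 := B l (Nat.lt_succ_self l)
  have hlast2 : (Fin.last l) = (⟨l, Nat.lt_succ_self l⟩ : Fin (l+1)) := rfl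
  rw [← hlast2] at h2
  exact h1.trans h2

lemma dfReach_of_forall {d n l : ℕ} (u : Fin (n+1) → Pt d) (v : Fin (l+1) → Pt d) (δ : ℝ)
    (h : ∀ i k, dist (u i) (v k) ≤ δ) : dfReach u v δ :=
  ⟨h _ _, h _ _, reach_full u v δ h⟩

lemma dF_nonneg {d n l : ℕ} (u : Fin (n+1) → Pt d) (v : Fin (l+1) → Pt d) :
    0 ≤ dF u v :=
  Real.sInf_nonneg (fun _ hx => hx.1.le)

lemma dF_set_bddBelow {d n l : ℕ} (u : Fin (n+1) → Pt d) (v : Fin (l+1) → Pt d) :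
    BddBelow {δ : ℝ | 0 < δ ∧ dfReach u v δ} :=
  ⟨0, fun _ hx => hx.1.le⟩

lemma dF_le_of_forall {d n l : ℕ} (u : Fin (n+1) → Pt d) (v : Fin (l+1) → Pt d) (δ : ℝ)
    (hδ : 0 < δ) (h : ∀ i k, dist (u i) (v k) ≤ δ) : dF u v ≤ δ :=
  csInf_le (dF_set_bddBelow u v) ⟨hδ, dfReach_of_forall u v δ h⟩

/-- A uniform bound on all pairwise distances, plus positivity. -/
lemma exists_uniform_bound {d n l : ℕ} (u : Fin (n+1) → Pt d) (v : Fin (l+1) → Pt d) :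
    ∃ C : ℝ, 0 < C ∧ ∀ i k, dist (u i) (v k) ≤ C := by
  have hne : (Finset.univ : Finset (Fin (n+1) × Fin (l+1))).Nonempty := Finset.univ_nonempty
  set C0 : ℝ := Finset.sup' Finset.univ hne (fun p : Fin (n+1) × Fin (l+1) => dist (u p.1) (v p.2)) with hC0
  have hb : ∀ i k, dist (u i) (v k) ≤ C0 := fun i k =>
    Finset.le_sup' (f := fun p : Fin (n+1) × Fin (l+1) => dist (u p.1) (v p.2)) (Finset.mem_univ (i, k))
  have h0 : (0:ℝ) ≤ C0 := le_trans dist_nonneg (hb 0 0)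
  exact ⟨C0 + 1, by linarith, fun i k => by have := hb i k; linarith⟩

lemma dF_ge_of_matchings {d n l : ℕ} (u : Fin (n+1) → Pt d) (v : Fin (l+1) → Pt d) (M : ℝ)
    (h : ∀ j : Fin (n+1) → Fin (l+1), Monotone j → ∃ i, M ≤ dist (u i) (v (j i))) :
    M ≤ dF u v := by
  obtain ⟨C, hC, hCb⟩ := exists_uniform_bound u v
  have hne : {δ : ℝ | 0 < δ ∧ dfReach u v δ}.Nonempty :=
    ⟨C, hC, dfReach_of_forall u v C hCb⟩
  refine le_csInf hne ?_
  rintro x ⟨hx0, h0, hlast, hpath⟩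
  obtain ⟨j, hm, hj, hall⟩ := extract_mono u v x h0 hpath
  obtain ⟨i, hi⟩ := h j hm
  exact hi.trans (hall i (Fin.le_last i))

lemma Fc_set_bddBelow {d n m : ℕ} (u : Fin (n+1) → Pt d) (b : Fin (m+1) → Pt d) :
    BddBelow {v : ℝ | ∃ (l : ℕ) (f : Fin (l+1) → Fin (m+1)), StrictMono f ∧ v = dF u (b ∘ f)} := by
  refine ⟨0, ?_⟩
  rintro x ⟨l, f, hf, rfl⟩
  exact dF_nonneg u (b ∘ f)

lemma Fc_ge_of_matchings {d n m : ℕ} (u : Fin (n+1) → Pt d) (b : Fin (m+1) → Pt d) (M : ℝ)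
    (h : ∀ j : Fin (n+1) → Fin (m+1), Monotone j → ∃ i, M ≤ dist (u i) (b (j i))) :
    M ≤ Fc u b := by
  have hne : {v : ℝ | ∃ (l : ℕ) (f : Fin (l+1) → Fin (m+1)), StrictMono f ∧ v = dF u (b ∘ f)}.Nonempty :=
    ⟨dF u (b ∘ (id : Fin (m+1) → Fin (m+1))), m, id, strictMono_id, rfl⟩
  refine le_csInf hne ?_
  rintro x ⟨l, f, hf, rfl⟩
  refine dF_ge_of_matchings u (b ∘ f) M ?_
  intro j' hm'
  obtain ⟨i, hi⟩ := h (f ∘ j') (hf.monotone.comp hm')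
  exact ⟨i, hi⟩

lemma Fc_le_of_forall {d n m : ℕ} (u : Fin (n+1) → Pt d) (b : Fin (m+1) → Pt d) (C : ℝ)
    (hC : 0 < C) (h : ∀ i k, dist (u i) (b k) ≤ C) : Fc u b ≤ C := by
  have h1 : Fc u b ≤ dF u (b ∘ (id : Fin (m+1) → Fin (m+1))) :=
    csInf_le (Fc_set_bddBelow u b) ⟨m, id, strictMono_id, rfl⟩
  rw [Function.comp_id] at h1
  exact h1.trans (dF_le_of_forall u b C hC h)

/-- if the greedy procedure fails, i.e. there is no monotone choice of indices
`j*` with `w_{j*(i)} ⊆ D(u_i, δ)` for all `i`, then some realization `B` of `W` has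
`F_c(U,B) > δ`; consequently the supremum over realizations of `F_c(U,B)` exceeds `δ`. -/
theorem exists_realization_Fc_gt_of_greedy_failure {d n m : ℕ}
    (u : Fin (n+1) → Pt d) (c : Fin (m+1) → Pt d) (r : Fin (m+1) → ℝ)
    (hr : ∀ x, 0 ≤ r x) (δ : ℝ) (hδ : 0 < δ)
    (hfail : ¬ ∃ j : Fin (n+1) → Fin (m+1), Monotone j ∧
      ∀ i, closedBall (c (j i)) (r (j i)) ⊆ closedBall (u i) δ) :
    (∃ b : Fin (m+1) → Pt d, (∀ x, b x ∈ closedBall (c x) (r x)) ∧ δ < Fc u b) ∧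
    δ < sSup {v : ℝ | ∃ b : Fin (m+1) → Pt d,
        (∀ x, b x ∈ closedBall (c x) (r x)) ∧ v = Fc u b} := by
  classical
  set G : ℕ → ℕ → Prop := fun i k => ∀ (hi : i < n+1) (hk : k < m+1),
      closedBall (c ⟨k, hk⟩) (r ⟨k, hk⟩) ⊆ closedBall (u ⟨i, hi⟩) δ with hG
  have hfail' : ¬ ∃ j : Fin (n+1) → Fin (m+1), Monotone j ∧
      ∀ i : Fin (n+1), G (i : ℕ) ((j i : ℕ)) := by
    rintro ⟨j, hm, hall⟩
    refine hfail ⟨j, hm, fun i => ?_⟩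
    have := hall i i.isLt (j i).isLt
    simpa using this
  obtain ⟨a, h1, h2⟩ := GreedyAux.greedy_core G hfail'
  -- extract witness points
  have h1' : ∀ k : Fin (m+1), ∃ x ∈ closedBall (c k) (r k), δ < dist (u (a k)) x := by
    intro k
    have hns : ¬ closedBall (c k) (r k) ⊆ closedBall (u (a k)) δ := by
      intro hs
      refine h1 k ?_
      intro hi hk
      simpa using hs
    obtain ⟨x, hx, hxn⟩ := Set.not_subset.1 hns
    refine ⟨x, hx, ?_⟩
    rw [mem_closedBall, not_le] at hxn
    rwa [dist_comm]
  choose b hb hbd using h1'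
  -- the margin
  have hneu : (Finset.univ : Finset (Fin (m+1))).Nonempty := Finset.univ_nonempty
  set M : ℝ := Finset.inf' Finset.univ hneu (fun k => dist (u (a k)) (b k)) with hM
  have hMδ : δ < M := by
    rw [hM, Finset.lt_inf'_iff]
    intro k _
    exact hbd k
  have hMle : ∀ k, M ≤ dist (u (a k)) (b k) := fun k =>
    Finset.inf'_le _ (Finset.mem_univ k)
  have key : ∀ j : Fin (n+1) → Fin (m+1), Monotone j →
      ∃ i, M ≤ dist (u i) (b (j i)) := by
    intro j hj
    obtain ⟨i, hi⟩ := h2 j hj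
    refine ⟨i, ?_⟩
    have := hMle (j i)
    rwa [hi] at this
  have hFc : δ < Fc u b := lt_of_lt_of_le hMδ (Fc_ge_of_matchings u b M key)
  -- uniform upper bound over realizations
  have hneu2 : (Finset.univ : Finset (Fin (n+1) × Fin (m+1))).Nonempty := Finset.univ_nonempty
  set C1 : ℝ := Finset.sup' Finset.univ hneu2
      (fun p : Fin (n+1) × Fin (m+1) => dist (u p.1) (c p.2) + r p.2) with hC1
  have hC1b : ∀ i k, dist (u i) (c k) + r k ≤ C1 := fun i k =>
    Finset.le_sup' (f := fun p : Fin (n+1) × Fin (m+1) => dist (u p.1) (c p.2) + r p.2)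
      (Finset.mem_univ (i, k))
  have hC10 : (0:ℝ) ≤ C1 := by
    have := hC1b 0 0
    have h0 := dist_nonneg (x := u 0) (y := c 0)
    have h0' := hr 0
    linarith
  have hbdd : ∀ b' : Fin (m+1) → Pt d, (∀ x, b' x ∈ closedBall (c x) (r x)) →
      Fc u b' ≤ C1 + 1 := by
    intro b' hb'
    refine Fc_le_of_forall u b' (C1 + 1) (by linarith) ?_
    intro i k
    have hd1 : dist (u i) (b' k) ≤ dist (u i) (c k) + dist (c k) (b' k) := dist_triangle _ _ _
    have hd2 : dist (c k) (b' k) ≤ r k := by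
      have := hb' k
      rw [mem_closedBall] at this
      rwa [dist_comm]
    have := hC1b i k
    linarith
  refine ⟨⟨b, hb, hFc⟩, ?_⟩
  refine lt_csSup_of_lt ?_ ⟨b, hb, rfl⟩ hFc
  refine ⟨C1 + 1, ?_⟩
  rintro x ⟨b', hb', rfl⟩
  exact hbdd b' hb'
end
end

section
/- Let U be a precise point sequence and W a sequence of closed balls in ℝ^d. The supremum over realizations B of W of the one-sided shortcut discrete Fréchet distance F_c(U,B) is at most δ if and only if the greedy procedure succeeds, i.e., there exist indices j*(1) ≤ … ≤ j*(n) with w_{j*(i)} ⊆ D(u_i, δ) for all i, where each j*(i) is chosen greedily minimal. -/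
open Metric

noncomputable section

/-!
Write `good i x` for `w_x ⊆ D(u_i, δ)`. If no monotone `j` with `good i (j i)` for all `i`
exists, let `W x` be the first index at which the greedy procedure cannot stay at or below
ball `x`. Then `good (W x) x` fails, and every monotone `M` has a fixed point `W (M i) = i`.
Realize each ball `w_x` by a point farther than `δ` from `u_{W x}`: a coupling of `U` with a
subsequence of this `B` induces a monotone `M`, and its pair at such a fixed point is farther than
`δ` apart, so `F_c(U, B) > δ`. Conversely, a monotone `j` couples `U`, in every realization,
with the subsequence of `B` indexed by the image of `j`, along the graph of `j`.
-/

open Function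

theorem Monotone.ite_lt {ι α : Type*} [LinearOrder ι] [Preorder α] {f : ι → α}
    (hf : Monotone f) {a : ι} {c : α} (hc : ∀ i < a, f i ≤ c) :
    Monotone fun i => if i < a then f i else c := by
  intro i i' h
  dsimp only
  split_ifs with hi hi' hi'
  · exact hf h
  · exact hc i hi
  · exact absurd (h.trans_lt hi') hi
  · exact le_rfl

theorem Monotone.map_bot_of_surjective {α β : Type*} [Preorder α] [OrderBot α] [PartialOrder β]
    [OrderBot β] {g : α → β} (hg : Monotone g) (hs : Surjective g) : g ⊥ = ⊥ := by
  obtain ⟨k, hk⟩ := hs ⊥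
  exact le_bot_iff.mp (hk ▸ hg bot_le)

theorem Monotone.map_top_of_surjective {α β : Type*} [Preorder α] [OrderTop α] [PartialOrder β]
    [OrderTop β] {g : α → β} (hg : Monotone g) (hs : Surjective g) : g ⊤ = ⊤ :=
  hg.dual.map_bot_of_surjective hs

namespace Fin

variable {n l : ℕ}

theorem val_succ_le_of_monotone_of_surjective {g : Fin (n+1) → Fin (l+1)} (hg : Monotone g)
    (hs : Surjective g) (i : Fin n) : (g i.succ : ℕ) ≤ g i.castSucc + 1 := by
  by_contra! h
  obtain ⟨k, hk⟩ := hs ⟨g i.castSucc + 1, by have := (g i.succ).isLt; omega⟩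
  have hk' : (g k : ℕ) = g i.castSucc + 1 := by rw [hk]
  rcases le_or_gt k i.castSucc with hki | hki
  · have := le_def.mp (hg hki)
    omega
  · have := le_def.mp (hg (castSucc_lt_iff_succ_le.mp hki))
    omega

theorem exists_strictMono_comp_surjective {α : Type*} [LinearOrder α] {j : Fin (n+1) → α}
    (hj : Monotone j) : ∃ (l : ℕ) (f : Fin (l+1) → α) (g : Fin (n+1) → Fin (l+1)),
      StrictMono f ∧ Monotone g ∧ Surjective g ∧ f ∘ g = j := by
  classical
  set s := Finset.univ.image j
  have hcard : s.card = s.card - 1 + 1 :=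
    (Nat.succ_pred_eq_of_pos (Finset.univ_nonempty.image j).card_pos).symm
  let e := s.orderIsoOfFin hcard
  have hmem : ∀ i, j i ∈ s := fun i => Finset.mem_image_of_mem j (Finset.mem_univ i)
  refine ⟨_, fun t => e t, fun i => e.symm ⟨j i, hmem i⟩, fun t t' h => e.strictMono h,
    fun i i' h => e.symm.monotone (hj h), fun t => ?_, funext fun i => by simp⟩
  obtain ⟨i, -, hi⟩ := Finset.mem_image.mp (e t).2
  exact ⟨i, e.symm_apply_eq.mpr (Subtype.ext hi)⟩

end Fin

section Frechet

variable {k n m : ℕ} {a : Fin (n+1) → Pt k} {b : Fin (m+1) → Pt k} {δ ε : ℝ}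

theorem reflTransGen_of_dfStep {R : Fin (n+1) × Fin (m+1) → Fin (n+1) × Fin (m+1) → Prop}
    (hR : ∀ p q, dfStep p q → R p q) (p : Fin (n+1) × Fin (m+1)) :
    Relation.ReflTransGen R (0, 0) p := by
  obtain ⟨i, j⟩ := p
  induction j using Fin.induction with
  | zero =>
    induction i using Fin.induction with
    | zero => rfl
    | succ i ih => exact ih.tail (hR _ _ (Or.inl ⟨Fin.val_succ i, rfl⟩))
  | succ j ih => exact ih.tail (hR _ _ (Or.inr (Or.inl ⟨rfl, Fin.val_succ j⟩)))

theorem exists_monotone_of_reflTransGen_dfStep {P : Fin (n+1) → Fin (m+1) → Prop} (h0 : P 0 0)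
    {q : Fin (n+1) × Fin (m+1)}
    (h : Relation.ReflTransGen (fun p q => dfStep p q ∧ P q.1 q.2) (0, 0) q) :
    ∃ M : Fin (n+1) → Fin (m+1), Monotone M ∧ M q.1 = q.2 ∧ ∀ i ≤ q.1, P i (M i) := by
  induction h with
  | refl => exact ⟨fun _ => 0, monotone_const, rfl, fun i hi => nonpos_iff_eq_zero.mp hi ▸ h0⟩
  | @tail p q _ hpq ih =>
    obtain ⟨M, hM, hMp, hP⟩ := ih
    obtain ⟨hstep, hq⟩ := hpq
    have hprev : ∀ i < q.1, i ≤ p.1 := by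
      intro i hi
      rw [Fin.lt_def] at hi
      rw [Fin.le_def]
      rcases hstep with ⟨h, -⟩ | ⟨h, -⟩ | ⟨h, -⟩ <;> rw [h] at hi <;> omega
    have hp2 : p.2 ≤ q.2 := by
      rw [Fin.le_def]
      rcases hstep with ⟨-, h⟩ | ⟨-, h⟩ | ⟨-, h⟩ <;> rw [h] <;> omega
    refine ⟨fun i => if i < q.1 then M i else q.2,
      hM.ite_lt fun i hi => (hM (hprev i hi)).trans (hMp ▸ hp2), by simp, fun i hi => ?_⟩
    dsimp only
    split_ifs with hiq
    · exact hP i (hprev i hiq)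
    · exact le_antisymm hi (not_lt.mp hiq) ▸ hq

theorem dfReach.exists_monotone (h : dfReach a b δ) :
    ∃ M : Fin (n+1) → Fin (m+1), Monotone M ∧ ∀ i, dist (a i) (b (M i)) ≤ δ := by
  obtain ⟨h0, -, hpath⟩ := h
  obtain ⟨M, hM, -, hd⟩ := exists_monotone_of_reflTransGen_dfStep
    (P := fun i j => dist (a i) (b j) ≤ δ) h0
    (Relation.ReflTransGen.mono (fun _ _ h => ⟨h.1, h.2.2⟩) _ _ hpath)
  exact ⟨M, hM, fun i => hd i i.le_last⟩

theorem dfReach.mono (h : dfReach a b δ) (hδε : δ ≤ ε) : dfReach a b ε :=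
  ⟨h.1.trans hδε, h.2.1.trans hδε,
    Relation.ReflTransGen.mono (fun _ _ hpq => ⟨hpq.1, hpq.2.1.trans hδε, hpq.2.2.trans hδε⟩)
      _ _ h.2.2⟩

theorem dfReach_of_forall_dist_le (h : ∀ i j, dist (a i) (b j) ≤ δ) : dfReach a b δ :=
  ⟨h _ _, h _ _, reflTransGen_of_dfStep (fun _ _ hs => ⟨hs, h _ _, h _ _⟩) _⟩

theorem exists_pos_dfReach (a : Fin (n+1) → Pt k) (b : Fin (m+1) → Pt k) :
    ∃ δ, 0 < δ ∧ dfReach a b δ := by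
  obtain ⟨p, hp⟩ := Finite.exists_max fun p : Fin (n+1) × Fin (m+1) => dist (a p.1) (b p.2)
  refine ⟨dist (a p.1) (b p.2) + 1, by positivity, dfReach_of_forall_dist_le fun i j => ?_⟩
  linarith [hp (i, j)]

theorem dfReach_of_monotone_surjective {g : Fin (n+1) → Fin (m+1)} (hg : Monotone g)
    (hs : Surjective g) (hd : ∀ i, dist (a i) (b (g i)) ≤ δ) : dfReach a b δ := by
  have hg0 : g 0 = 0 := hg.map_bot_of_surjective hs
  have hglast : g (Fin.last n) = Fin.last m := hg.map_top_of_surjective hs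
  have hpath : ∀ i, Relation.ReflTransGen
      (fun p q => dfStep p q ∧ dist (a p.1) (b p.2) ≤ δ ∧ dist (a q.1) (b q.2) ≤ δ)
      (0, 0) (i, g i) := by
    intro i
    induction i using Fin.induction with
    | zero => rw [hg0]
    | succ i ih =>
      refine ih.tail ⟨?_, hd _, hd _⟩
      have hle := Fin.le_def.mp (hg i.castSucc_le_succ)
      have hstep := Fin.val_succ_le_of_monotone_of_surjective hg hs i
      rcases hle.eq_or_lt with h | h
      · exact Or.inl ⟨Fin.val_succ i, Fin.ext h.symm⟩
      · exact Or.inr (Or.inr ⟨Fin.val_succ i, show (g i.succ : ℕ) = g i.castSucc + 1 by omega⟩)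
  exact ⟨hg0 ▸ hd 0, hglast ▸ hd _, hglast ▸ hpath _⟩

theorem dF_nonneg_s7 (a : Fin (n+1) → Pt k) (b : Fin (m+1) → Pt k) : 0 ≤ dF a b :=
  Real.sInf_nonneg fun _ hx => hx.1.le

theorem dF_le_of_dfReach (h : dfReach a b δ) : dF a b ≤ δ := by
  have hδ : 0 ≤ δ := dist_nonneg.trans h.1
  refine le_of_forall_pos_le_add fun ε hε => ?_
  exact csInf_le ⟨0, fun _ hx => hx.1.le⟩ ⟨by positivity, h.mono (by linarith)⟩

theorem exists_monotone_dist_lt_of_dF_lt (h : dF a b < ε) :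
    ∃ M : Fin (n+1) → Fin (m+1), Monotone M ∧ ∀ i, dist (a i) (b (M i)) < ε := by
  obtain ⟨δ, ⟨-, hreach⟩, hδε⟩ :=
    exists_lt_of_csInf_lt (by exact exists_pos_dfReach a b) h
  obtain ⟨M, hM, hd⟩ := hreach.exists_monotone
  exact ⟨M, hM, fun i => (hd i).trans_lt hδε⟩

theorem Fc_le_of_monotone {j : Fin (n+1) → Fin (m+1)} (hj : Monotone j)
    (hd : ∀ i, dist (a i) (b (j i)) ≤ δ) : Fc a b ≤ δ := by
  obtain ⟨l, f, g, hf, hg, hs, rfl⟩ := Fin.exists_strictMono_comp_surjective hj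
  calc Fc a b ≤ dF a (b ∘ f) :=
        csInf_le ⟨0, by rintro _ ⟨_, _, _, rfl⟩; exact dF_nonneg_s7 _ _⟩ ⟨l, f, hf, rfl⟩
    _ ≤ δ := dF_le_of_dfReach (dfReach_of_monotone_surjective hg hs hd)

theorem exists_monotone_dist_lt_of_Fc_lt (h : Fc a b < ε) :
    ∃ M : Fin (n+1) → Fin (m+1), Monotone M ∧ ∀ i, dist (a i) (b (M i)) < ε := by
  obtain ⟨_, ⟨l, f, hf, rfl⟩, hlt⟩ :=
    exists_lt_of_csInf_lt (by exact ⟨_, m, id, strictMono_id, rfl⟩) h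
  obtain ⟨M, hM, hd⟩ := exists_monotone_dist_lt_of_dF_lt hlt
  exact ⟨f ∘ M, hf.monotone.comp hM, hd⟩

end Frechet

section Greedy

variable {n : ℕ} {α : Type*} [Preorder α] (good : Fin (n+1) → α → Prop)

/-- `GreedyLE good i x` says that the greedy index `j*(i)` exists and is at most `x`. -/
def GreedyLE (i : Fin (n+1)) (x : α) : Prop :=
  ∃ j : Fin (n+1) → α, Monotone j ∧ (∀ s ≤ i, good s (j s)) ∧ j i ≤ x

variable {good}

theorem GreedyLE.mono_right {i : Fin (n+1)} {x y : α} (h : GreedyLE good i x) (hxy : x ≤ y) :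
    GreedyLE good i y :=
  let ⟨j, hj, hgood, hjx⟩ := h
  ⟨j, hj, hgood, hjx.trans hxy⟩

theorem GreedyLE.of_le {i s : Fin (n+1)} {x : α} (h : GreedyLE good i x) (hs : s ≤ i) :
    GreedyLE good s x :=
  let ⟨j, hj, hgood, hjx⟩ := h
  ⟨j, hj, fun t ht => hgood t (ht.trans hs), (hj hs).trans hjx⟩

theorem greedyLE_zero {x : α} (hx : good 0 x) : GreedyLE good 0 x :=
  ⟨fun _ => x, monotone_const, fun _ hs => nonpos_iff_eq_zero.mp hs ▸ hx, le_rfl⟩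

theorem GreedyLE.succ {i : Fin n} {x : α} (h : GreedyLE good i.castSucc x) (hx : good i.succ x) :
    GreedyLE good i.succ x := by
  obtain ⟨j, hj, hgood, hjx⟩ := h
  have hlt : ∀ s, s < i.succ ↔ s ≤ i.castSucc := fun _ => Fin.le_castSucc_iff.symm
  refine ⟨fun s => if s < i.succ then j s else x,
    hj.ite_lt fun s hs => (hj ((hlt s).mp hs)).trans hjx, fun s hs => ?_, by simp⟩
  dsimp only
  split_ifs with hsi
  · exact hgood s ((hlt s).mp hsi)
  · exact le_antisymm hs (not_lt.mp hsi) ▸ hx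

variable (good)

theorem exists_monotone_or_exists_blame :
    (∃ j : Fin (n+1) → α, Monotone j ∧ ∀ i, good i (j i)) ∨
      ∃ W : α → Fin (n+1), (∀ x, ¬good (W x) x) ∧
        ∀ M : Fin (n+1) → α, Monotone M → ∃ i, W (M i) = i := by
  classical
  by_cases h : ∃ x, GreedyLE good (Fin.last n) x
  · obtain ⟨x, j, hj, hgood, -⟩ := h
    exact Or.inl ⟨j, hj, fun i => hgood i i.le_last⟩
  push Not at h
  right
  let W x := (Finset.univ.filter fun i => ¬GreedyLE good i x).min' ⟨Fin.last n, by simp [h x]⟩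
  have hW : ∀ i x, i < W x ↔ GreedyLE good i x := by
    intro i x
    refine (Finset.lt_min'_iff _ _).trans ?_
    simp only [Finset.mem_filter, Finset.mem_univ, true_and]
    refine ⟨fun hi => by_contra fun hni => lt_irrefl i (hi i hni), fun hi s hs => ?_⟩
    exact lt_of_not_ge fun hsi => hs (hi.of_le hsi)
  refine ⟨W, fun x hx => ?_, fun M hM => ?_⟩
  · have hnot : ¬GreedyLE good (W x) x := fun hWx => lt_irrefl _ ((hW _ _).mpr hWx)
    rcases Fin.eq_zero_or_eq_succ (W x) with h0 | ⟨i, hi⟩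
    · exact hnot (h0 ▸ greedyLE_zero (h0 ▸ hx))
    · have hprev : GreedyLE good i.castSucc x := (hW _ _).mp (hi ▸ i.castSucc_lt_succ)
      exact hnot (hi ▸ hprev.succ (hi ▸ hx))
  · by_contra! hne
    have hreach : ∀ i, GreedyLE good i (M i) := by
      intro i
      induction i using Fin.induction with
      | zero => exact (hW _ _).mp ((Fin.zero_le _).lt_of_ne (hne 0).symm)
      | succ i ih =>
        have : i.castSucc < W (M i.succ) := (hW _ _).mpr (ih.mono_right (hM i.castSucc_le_succ))
        exact (hW _ _).mp ((Fin.castSucc_lt_iff_succ_le.mp this).lt_of_ne (hne _).symm)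
    exact h _ (hreach (Fin.last n))

end Greedy

theorem Fmax_le_iff_greedy_succeeds_general {d n m : ℕ}
    (u : Fin (n+1) → Pt d) (c : Fin (m+1) → Pt d) (r : Fin (m+1) → ℝ)
    (δ : ℝ) :
    (∀ b : Fin (m+1) → Pt d, (∀ x, b x ∈ closedBall (c x) (r x)) → Fc u b ≤ δ) ↔
    (∃ j : Fin (n+1) → Fin (m+1), Monotone j ∧
      ∀ i, closedBall (c (j i)) (r (j i)) ⊆ closedBall (u i) δ) := by
  constructor
  · intro H
    refine (exists_monotone_or_exists_blame
      fun i x => closedBall (c x) (r x) ⊆ closedBall (u i) δ).resolve_right ?_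
    rintro ⟨W, hW, hblame⟩
    have hfar : ∀ x, ∃ p ∈ closedBall (c x) (r x), δ < dist (u (W x)) p := fun x => by
      simpa [Set.not_subset, dist_comm] using hW x
    choose b hb hbfar using hfar
    obtain ⟨x₀, hx₀⟩ := Finite.exists_min fun x => dist (u (W x)) (b x)
    obtain ⟨M, hM, hMclose⟩ := exists_monotone_dist_lt_of_Fc_lt ((H b hb).trans_lt (hbfar x₀))
    obtain ⟨i, hi⟩ := hblame M hM
    have hfar_i := hx₀ (M i)
    rw [hi] at hfar_i
    exact (hMclose i).not_ge hfar_i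
  · rintro ⟨j, hj, hsub⟩ b hb
    exact Fc_le_of_monotone hj fun i => by simpa [dist_comm] using hsub i (hb (j i))

/-- Lemma 4 of the paper: the supremum over realizations `B` of `W` of the
one-sided shortcut discrete Fréchet distance `F_c(U,B)` is at most `δ` (equivalently,
`F_c(U,B) ≤ δ` for every realization `B`) iff the greedy procedure succeeds, i.e. there is
a monotone choice of indices `j*` with `w_{j*(i)} ⊆ D(u_i,δ)` for all `i`. -/
theorem Fmax_le_iff_greedy_succeeds {d n m : ℕ}
    (u : Fin (n+1) → Pt d) (c : Fin (m+1) → Pt d) (r : Fin (m+1) → ℝ)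
    (hr : ∀ x, 0 ≤ r x) (δ : ℝ) (hδ : 0 < δ) :
    (∀ b : Fin (m+1) → Pt d, (∀ x, b x ∈ closedBall (c x) (r x)) → Fc u b ≤ δ) ↔
    (∃ j : Fin (n+1) → Fin (m+1), Monotone j ∧
      ∀ i, closedBall (c (j i)) (r (j i)) ⊆ closedBall (u i) δ) :=
  Fmax_le_iff_greedy_succeeds_general u c r δ
end
end

section
/- Let Z(i,j) and F(i,j) be defined by the recurrences Z(1,j) = δ_{1,j}; Z(i+1,j) = max(F(i,j), δ_{i+1,j}) for i ≥ 1; F(i,1) = Z(i,1); F(i,j+1) = min(F(i,j), Z(i,j+1)) for j ≥ 1. Then F(i,j) = min over nondecreasing index sequences 1 ≤ k_1 ≤ k_2 ≤ … ≤ k_i ≤ j of max_{1≤l≤i} δ_{l,k_l}. -/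
noncomputable section

private lemma ciSup_split {n : ℕ} (g : Fin (n + 2) → ℝ) :
    (⨆ l, g l) = max (⨆ l : Fin (n + 1), g l.castSucc) (g (Fin.last (n + 1))) := by
  apply le_antisymm
  · refine ciSup_le fun l => ?_
    induction l using Fin.lastCases with
    | last => exact le_max_right _ _
    | cast l =>
        exact le_trans (le_ciSup (f := fun l : Fin (n+1) => g l.castSucc)
          (Set.finite_range _).bddAbove l) (le_max_left _ _)
  · exact max_le (ciSup_le fun l => le_ciSup (Set.finite_range _).bddAbove _)
      (le_ciSup (Set.finite_range _).bddAbove _)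

private lemma monotone_snoc' {n : ℕ} {k : Fin (n + 1) → ℕ} {j : ℕ}
    (hk : Monotone k) (hb : ∀ l, k l ≤ j) :
    Monotone (Fin.snoc k j : Fin (n + 2) → ℕ) := by
  intro a b hab
  rcases Fin.eq_castSucc_or_eq_last b with ⟨b', rfl⟩ | rfl
  · rcases Fin.eq_castSucc_or_eq_last a with ⟨a', rfl⟩ | rfl
    · simp only [Fin.snoc_castSucc]
      exact hk (by exact_mod_cast hab)
    · exact absurd (lt_of_le_of_lt hab (Fin.castSucc_lt_last b')) (lt_irrefl _)
  · rcases Fin.eq_castSucc_or_eq_last a with ⟨a', rfl⟩ | rfl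
    · simp only [Fin.snoc_castSucc, Fin.snoc_last]
      exact hb a'
    · simp

private lemma ciSup_fin_one (g : Fin (0+1) → ℝ) : (⨆ l, g l) = g 0 :=
  le_antisymm (ciSup_le fun l => by
      have := l.isLt
      have hl : l = 0 := Fin.ext (by omega)
      rw [hl])
    (le_ciSup (Set.finite_range _).bddAbove _)

/-- the dynamic program `Z, F` computes the min-over-monotone-assignments
bottleneck value: `F i j` equals the minimum, over nondecreasing index sequences
`k₀ ≤ k₁ ≤ … ≤ kᵢ ≤ j`, of `max_l δ_{l, k_l}` (0-based indexing). -/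
theorem dp_eq_bottleneck (δ : ℕ → ℕ → ℝ) (hδ : ∀ i j, 0 ≤ δ i j)
    (Z F : ℕ → ℕ → ℝ)
    (hZ0 : ∀ j, Z 0 j = δ 0 j)
    (hZ : ∀ i j, Z (i+1) j = max (F i j) (δ (i+1) j))
    (hF0 : ∀ i, F i 0 = Z i 0)
    (hF : ∀ i j, F i (j+1) = min (F i j) (Z i (j+1))) :
    ∀ i j, F i j = sInf {v : ℝ | ∃ k : Fin (i+1) → ℕ, Monotone k ∧ (∀ l, k l ≤ j) ∧
      v = ⨆ l : Fin (i+1), δ (l : ℕ) (k l)} := by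
  -- From Z-row properties, derive F-row properties (induction on j).
  have FfromZ : ∀ i,
      (∀ j, (∃ k : Fin (i+1) → ℕ, Monotone k ∧ (∀ l, k l ≤ j) ∧
          Z i j = ⨆ l : Fin (i+1), δ (l : ℕ) (k l)) ∧
        (∀ k : Fin (i+1) → ℕ, Monotone k → k (Fin.last i) = j →
          Z i j ≤ ⨆ l : Fin (i+1), δ (l : ℕ) (k l))) →
      ∀ j, (∃ k : Fin (i+1) → ℕ, Monotone k ∧ (∀ l, k l ≤ j) ∧
          F i j = ⨆ l : Fin (i+1), δ (l : ℕ) (k l)) ∧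
        (∀ k : Fin (i+1) → ℕ, Monotone k → (∀ l, k l ≤ j) →
          F i j ≤ ⨆ l : Fin (i+1), δ (l : ℕ) (k l)) := by
    intro i hZi j
    induction j with
    | zero =>
        constructor
        · obtain ⟨k, hk, hb, he⟩ := (hZi 0).1
          exact ⟨k, hk, hb, by rw [hF0]; exact he⟩
        · intro k hk hb
          rw [hF0]
          exact (hZi 0).2 k hk (Nat.le_zero.mp (hb _))
    | succ j ih =>
        constructor
        · rcases le_total (F i j) (Z i (j+1)) with h | h
          · obtain ⟨k, hk, hb, he⟩ := ih.1
            exact ⟨k, hk, fun l => (hb l).trans (Nat.le_succ _),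
              by rw [hF, min_eq_left h]; exact he⟩
          · obtain ⟨k, hk, hb, he⟩ := (hZi (j+1)).1
            exact ⟨k, hk, hb, by rw [hF, min_eq_right h]; exact he⟩
        · intro k hk hb
          rcases Nat.lt_succ_iff_lt_or_eq.mp (Nat.lt_succ_of_le (hb (Fin.last i)))
            with h | h
          · have hb' : ∀ l, k l ≤ j := fun l =>
              le_trans (hk (Fin.le_last l)) (Nat.lt_succ_iff.mp h)
            calc F i (j+1) ≤ F i j := by rw [hF]; exact min_le_left _ _
              _ ≤ _ := ih.2 k hk hb'
          · calc F i (j+1) ≤ Z i (j+1) := by rw [hF]; exact min_le_right _ _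
              _ ≤ _ := (hZi (j+1)).2 k hk h
  -- Z-row properties, by induction on i.
  have Zprop : ∀ i j, (∃ k : Fin (i+1) → ℕ, Monotone k ∧ (∀ l, k l ≤ j) ∧
        Z i j = ⨆ l : Fin (i+1), δ (l : ℕ) (k l)) ∧
      (∀ k : Fin (i+1) → ℕ, Monotone k → k (Fin.last i) = j →
        Z i j ≤ ⨆ l : Fin (i+1), δ (l : ℕ) (k l)) := by
    intro i
    induction i with
    | zero =>
        intro j
        constructor
        · refine ⟨fun _ => j, monotone_const, fun _ => le_rfl, ?_⟩
          rw [ciSup_fin_one]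
          simp [hZ0]
        · intro k hk hlast
          rw [ciSup_fin_one, hZ0]
          have hk0 : k 0 = j := hlast
          simp [hk0]
    | succ i ihZ =>
        have hFi := FfromZ i ihZ
        intro j
        constructor
        · obtain ⟨k, hk, hb, he⟩ := (hFi j).1
          refine ⟨Fin.snoc k j, monotone_snoc' hk hb, ?_, ?_⟩
          · intro l
            rcases Fin.eq_castSucc_or_eq_last l with ⟨l', rfl⟩ | rfl
            · simpa using hb l'
            · simp
          · rw [ciSup_split, hZ]
            congr 1
            · rw [he]
              apply le_antisymm <;>
                refine ciSup_le fun l => ?_ <;>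
                · refine le_trans ?_ (le_ciSup (Set.finite_range _).bddAbove l)
                  simp
            · simp
        · intro k hk hlast
          rw [hZ]
          have hb' : ∀ l : Fin (i+1), k l.castSucc ≤ j := fun l => by
            rw [← hlast]; exact hk (Fin.le_last _)
          have h1 : F i j ≤ ⨆ l : Fin (i+1), δ (l : ℕ) (k l.castSucc) :=
            (hFi j).2 (fun l => k l.castSucc) (fun a b hab => hk (by simpa using hab)) hb'
          refine max_le (h1.trans (ciSup_le fun l => ?_)) ?_
          · refine le_trans ?_ (le_ciSup (Set.finite_range _).bddAbove l.castSucc)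
            simp
          · have := le_ciSup (f := fun l : Fin (i+2) => δ (l : ℕ) (k l))
              (Set.finite_range _).bddAbove (Fin.last (i+1))
            simpa [hlast] using this
  intro i j
  obtain ⟨⟨k, hk, hb, he⟩, hlb⟩ := FfromZ i (Zprop i) j
  apply le_antisymm
  · exact le_csInf ⟨_, k, hk, hb, rfl⟩ (by rintro v ⟨k', hk', hb', rfl⟩; exact hlb k' hk' hb')
  · exact csInf_le ⟨F i j, by rintro v ⟨k', hk', hb', rfl⟩; exact hlb k' hk' hb'⟩
      ⟨k, hk, hb, he⟩
end
end

section
/- Given a 3-CNF formula φ with n variables and m clauses, construct the directed colored graph G as follows: vertices s and t; for each variable x_i, two vertices labeled x_i and ¬x_i sharing color i; for each clause C_j, three vertices sharing a fresh color, one per literal of C_j; edges from s to every clause vertex, from the clause vertex for literal ℓ in C_j to the variable vertex for ¬ℓ, and from every variable vertex to t. Then φ is satisfiable if and only if there is a choice of exactly one vertex per color such that the induced subgraph (together with s and t) contains no directed path from s to t. -/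
/-- Vertices of the directed colored graph constructed from a 3-CNF formula:
a source `src`, a target `tgt`, two vertices per variable (colored by the variable),
and three vertices per clause (colored by the clause, one per literal). -/
inductive ISCPCSVertex (n m : ℕ) where
  | src : ISCPCSVertex n m
  | tgt : ISCPCSVertex n m
  | var : Fin n → Bool → ISCPCSVertex n m
  | cl : Fin m → Fin 3 → ISCPCSVertex n m

/-- Edges of the graph: `s` to every clause vertex, the clause vertex for literal `ℓ`
to the variable vertex for `¬ℓ`, and every variable vertex to `t`.
A literal is a pair (variable index, polarity); `φ j t` is the `t`-th literal of clause `j`. -/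
def ISCPCSEdge {n m : ℕ} (φ : Fin m → Fin 3 → Fin n × Bool) :
    ISCPCSVertex n m → ISCPCSVertex n m → Prop
  | .src, .cl _ _ => True
  | .cl j t, .var x b => (φ j t).1 = x ∧ (φ j t).2 = !b
  | .var _ _, .tgt => True
  | _, _ => False

/-- The chosen vertices: `s`, `t`, one vertex per variable color (given by `σ`) and one
vertex per clause color (given by `γ`). -/
def ISCPCSChosen {n m : ℕ} (σ : Fin n → Bool) (γ : Fin m → Fin 3) :
    ISCPCSVertex n m → Prop
  | .src => True
  | .tgt => True
  | .var i b => σ i = b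
  | .cl j t => γ j = t

/-- Lemma 1 of the paper: a 3-CNF formula `φ` is satisfiable iff there is a
choice of exactly one vertex per color such that the induced subgraph (together with `s`
and `t`) has no directed path from `s` to `t`. -/
theorem satisfiable_iff_exists_choice_no_path {n m : ℕ}
    (φ : Fin m → Fin 3 → Fin n × Bool) :
    (∃ τ : Fin n → Bool, ∀ j : Fin m, ∃ t : Fin 3, τ (φ j t).1 = (φ j t).2) ↔
    (∃ (σ : Fin n → Bool) (γ : Fin m → Fin 3),
      ¬ Relation.ReflTransGen
          (fun v w => ISCPCSEdge φ v w ∧ ISCPCSChosen σ γ v ∧ ISCPCSChosen σ γ w)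
          ISCPCSVertex.src ISCPCSVertex.tgt) := by
  constructor
  · rintro ⟨τ, hτ⟩
    choose γ hγ using hτ
    refine ⟨τ, γ, fun hpath => ?_⟩
    have key : ∀ v : ISCPCSVertex n m,
        Relation.ReflTransGen
          (fun v w => ISCPCSEdge φ v w ∧ ISCPCSChosen τ γ v ∧ ISCPCSChosen τ γ w)
          ISCPCSVertex.src v →
        (v = .src ∨ ∃ j, v = .cl j (γ j)) := by
      intro v h
      induction h with
      | refl => exact Or.inl rfl
      | @tail b c hab hstep ih =>
        obtain ⟨hedge, _, hch⟩ := hstep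
        rcases ih with rfl | ⟨j, rfl⟩
        · cases c with
          | cl j t => exact Or.inr ⟨j, by simpa [ISCPCSChosen] using hch.symm ▸ rfl⟩
          | src => exact absurd hedge (by simp [ISCPCSEdge])
          | tgt => exact absurd hedge (by simp [ISCPCSEdge])
          | var x b => exact absurd hedge (by simp [ISCPCSEdge])
        · cases c with
          | var x b =>
            obtain ⟨h1, h2⟩ := hedge
            simp only [ISCPCSChosen] at hch
            have := hγ j
            rw [h1, h2, hch] at this
            exact absurd this (by simp)
          | src => exact absurd hedge (by simp [ISCPCSEdge])
          | tgt => exact absurd hedge (by simp [ISCPCSEdge])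
          | cl j' t' => exact absurd hedge (by simp [ISCPCSEdge])
    rcases key _ hpath with h | ⟨j, h⟩ <;> simp at h
  · rintro ⟨σ, γ, hno⟩
    refine ⟨σ, fun j => ⟨γ j, ?_⟩⟩
    by_contra h
    apply hno
    have h2 : σ (φ j (γ j)).1 = !(φ j (γ j)).2 := by
      cases hb : (φ j (γ j)).2 <;> cases hs : σ (φ j (γ j)).1 <;>
        simp_all
    set R := fun v w => ISCPCSEdge φ v w ∧ ISCPCSChosen σ γ v ∧ ISCPCSChosen σ γ w with hR
    have s1 : R ISCPCSVertex.src (ISCPCSVertex.cl j (γ j)) := ⟨trivial, trivial, rfl⟩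
    have s2 : R (ISCPCSVertex.cl j (γ j))
        (ISCPCSVertex.var (φ j (γ j)).1 (!(φ j (γ j)).2)) := ⟨⟨rfl, by simp⟩, rfl, h2⟩
    have s3 : R (ISCPCSVertex.var (φ j (γ j)).1 (!(φ j (γ j)).2)) ISCPCSVertex.tgt :=
      ⟨trivial, h2, trivial⟩
    exact Relation.ReflTransGen.head s1
      (Relation.ReflTransGen.head s2 (Relation.ReflTransGen.single s3))
end

section
/- Suppose F(i,j) is nonincreasing in j for fixed i and D(i+1,j,k) is nondecreasing in j for fixed i,k. Define G(k) = min_{1 ≤ j ≤ k} max(F(i,j), D(i+1,j,k)), and let j_k be a minimizer. If additionally D(i+1,j,k) is nonincreasing in k for fixed j, then the minimizers can be chosen nondecreasing: there exist minimizers with j_k ≤ j_{k+1}. -/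
/-- monotone-minimizer / Monge property: if `F` is nonincreasing,
`D(·,k)` is nondecreasing in `j`, and `D(j,·)` is nonincreasing in `k`, then for
`G(k) = min_{j ≤ k} max(F j, D j k)` the minimizers can be chosen nondecreasing in `k`. -/
theorem monotone_minimizers (F : ℕ → ℝ) (D : ℕ → ℕ → ℝ)
    (hF : Antitone F)
    (hDj : ∀ k, Monotone (fun j => D j k))
    (hDk : ∀ j, Antitone (fun k => D j k)) :
    ∃ jk : ℕ → ℕ, Monotone jk ∧ ∀ k, jk k ≤ k ∧
      ∀ j ≤ k, max (F (jk k)) (D (jk k) k) ≤ max (F j) (D j k) := by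
  have hex : ∀ k, ∃ j, j ≤ k ∧ ∀ j' ≤ k,
      max (F j) (D j k) ≤ max (F j') (D j' k) := by
    intro k
    obtain ⟨b, hb, hbmin⟩ := Finset.exists_min_image (Finset.range (k + 1))
      (fun j => max (F j) (D j k)) ⟨0, Finset.mem_range.2 (Nat.succ_pos k)⟩
    exact ⟨b, Nat.lt_succ_iff.mp (Finset.mem_range.mp hb),
      fun j' hj' => hbmin j' (Finset.mem_range.2 (Nat.lt_succ_iff.2 hj'))⟩
  refine ⟨fun k => Nat.find (hex k), ?_, fun k => Nat.find_spec (hex k)⟩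
  apply monotone_nat_of_le_succ
  intro k
  by_contra h
  push_neg at h
  set b := Nat.find (hex (k + 1)) with hbdef
  set a := Nat.find (hex k) with hadef
  have hPb := Nat.find_spec (hex (k + 1))
  have hPa := Nat.find_spec (hex k)
  have hba : b < a := h
  have hbk : b ≤ k := le_of_lt (lt_of_lt_of_le hba hPa.1)
  -- show b is a minimizer for k, contradicting leastness of a
  have hkey : max (F b) (D b k) ≤ max (F a) (D a k) := by
    have h1 : F b ≤ max (F a) (D a k) := by
      have hb1 : max (F b) (D b (k + 1)) ≤ max (F a) (D a (k + 1)) :=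
        hPb.2 a (hPa.1.trans (Nat.le_succ k))
      calc F b ≤ max (F b) (D b (k + 1)) := le_max_left _ _
        _ ≤ max (F a) (D a (k + 1)) := hb1
        _ ≤ max (F a) (D a k) := max_le_max le_rfl (hDk a (Nat.le_succ k))
    have h2 : D b k ≤ max (F a) (D a k) :=
      le_trans (hDj k hba.le) (le_max_right _ _)
    exact max_le h1 h2
  have hbmin : b ≤ k ∧ ∀ j' ≤ k,
      max (F b) (D b k) ≤ max (F j') (D j' k) :=
    ⟨hbk, fun j' hj' => hkey.trans (hPa.2 j' hj')⟩
  exact absurd (Nat.find_le hbmin) (not_le.2 hba)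
end
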